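/- arXiv:1603.01649 — 2 statements merged into one kernel-verified Lean document; each statement's English description precedes it below -/
import Mathlib

section
/- Deviation bound for the empirical variance (Lemma A.2, part 1): For every m ∈ ℕ there exists a constant C > 0 depending only on m such that for all n ∈ ℕ, all d ∈ (0,1) and all (X,W) ∈ 𝓕^{4m}_{η,τ}: sup_{k∈ℤ} P(ŵ_k/w_k < d) ≤ C·(1−d)^{−2m}·n^{−m}·η. -/
open MeasureTheory Complex Filter Real Set ProbabilityTheory
open scoped ENNReal NNReal Topology ComplexConjugate Classical

noncomputable section

namespace FLIR

instance : Fact ((0:ℝ) < 1) := ⟨one_pos⟩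

/-- `H = L²([0,1],ℂ)`, realized as the `L²` space of the circle of circumference `1`
with its normalized Haar (Lebesgue) measure. -/
abbrev H : Type := Lp ℂ 2 (@AddCircle.haarAddCircle 1 _)

instance : MeasurableSpace H := borel H
instance : BorelSpace H := ⟨rfl⟩

/-- The Fourier coefficient `⟨f, φ_k⟩ = ∫₀¹ f(t) e^{-2πikt} dt`. -/
def coef (f : H) (k : ℤ) : ℂ := fourierBasis.repr f k

/-- Sobolev weights `γ_k = 1 + |2πk|²`. -/
def γw (k : ℤ) : ℝ := 1 + (2 * Real.pi * (k : ℝ)) ^ 2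

/-- Squared Sobolev norm `‖f‖_ν² = ∑_k γ_k^ν |⟨f,φ_k⟩|²` (with value in `[0,∞]`). -/
def sobSq (ν : ℝ) (f : H) : ℝ≥0∞ := ∑' k : ℤ, ENNReal.ofReal (γw k ^ ν * ‖coef f k‖ ^ 2)

/-- Squared Sobolev distance between a coefficient sequence `b` and `f`. -/
def sobDiff (ν : ℝ) (b : ℤ → ℂ) (f : H) : ℝ≥0∞ :=
  ∑' k : ℤ, ENNReal.ofReal (γw k ^ ν * ‖b k - coef f k‖ ^ 2)

variable {Ω : Type} [MeasurableSpace Ω]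

/-- `x_k = E|⟨X,φ_k⟩|²`. -/
def xPop (μ : Measure Ω) (X : Ω → H) (k : ℤ) : ℝ := ∫ ω, ‖coef (X ω) k‖ ^ 2 ∂μ

/-- `w_k = E|⟨W,φ_k⟩|²`. -/
def wPop (μ : Measure Ω) (W : Ω → H) (k : ℤ) : ℝ := ∫ ω, ‖coef (W ω) k‖ ^ 2 ∂μ

/-- `c_k = E[⟨φ_k,X⟩ ⟨W,φ_k⟩]`. -/
def cPop (μ : Measure Ω) (X W : Ω → H) (k : ℤ) : ℂ :=
  ∫ ω, conj (coef (X ω) k) * coef (W ω) k ∂μ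

/-- `λ_k = |c_k|²/w_k`. -/
def lamPop (μ : Measure Ω) (X W : Ω → H) (k : ℤ) : ℝ :=
  ‖cPop μ X W k‖ ^ 2 / wPop μ W k

/-- `λ₊ = max(1, sup_k λ_k)`. -/
def lamPlus (μ : Measure Ω) (X W : Ω → H) : ℝ := max 1 (⨆ k : ℤ, lamPop μ X W k)

/-- `E‖X‖²`. -/
def EnormSq (μ : Measure Ω) (X : Ω → H) : ℝ := ∫ ω, ‖X ω‖ ^ 2 ∂μ

/-- The moment class `𝓕^m_{η,τ}`. -/
def memF (μ : Measure Ω) (X W : Ω → H) (m : ℕ) (η τ : ℝ) : Prop :=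
  1 ≤ η ∧ 1 ≤ τ ∧
  (∀ k : ℤ, ∫⁻ ω, ENNReal.ofReal (‖coef (X ω) k‖ ^ m) ∂μ
      ≤ ENNReal.ofReal (η * xPop μ X k ^ ((m : ℝ) / 2))) ∧
  (∀ k : ℤ, ∫⁻ ω, ENNReal.ofReal (‖coef (W ω) k‖ ^ m) ∂μ
      ≤ ENNReal.ofReal (η * wPop μ W k ^ ((m : ℝ) / 2))) ∧
  (∀ k : ℤ, lamPop μ X W k / wPop μ W k ≤ τ)

/-- The error class `𝓔^m_η`: centered, unit variance, `m`-th moment bounded by `η`. -/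
def memE (μ : Measure Ω) (U : Ω → ℝ) (m : ℕ) (η : ℝ) : Prop :=
  Measurable U ∧ Integrable U μ ∧ Integrable (fun ω => (U ω) ^ 2) μ ∧
  (∫ ω, U ω ∂μ) = 0 ∧ (∫ ω, (U ω) ^ 2 ∂μ) = 1 ∧
  ∫⁻ ω, ENNReal.ofReal (|U ω| ^ m) ∂μ ≤ ENNReal.ofReal η

/-- The link condition `(λ_k) ∈ 𝒮_{κ,d}`. -/
def memS (μ : Measure Ω) (X W : Ω → H) (κ : ℝ → ℝ) (d ν p : ℝ) : Prop :=
  ∀ k : ℤ,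
    κ (lamPop μ X W k / (d * γw k ^ ν * lamPlus μ X W)) ≤ γw k ^ (ν - p) ∧
    γw k ^ (ν - p) ≤ κ (d * lamPop μ X W k / (γw k ^ ν * lamPlus μ X W))

/-- An index function: continuous, strictly increasing, positive, vanishing at `0⁺`. -/
def IndexFun (κ : ℝ → ℝ) : Prop :=
  StrictMonoOn κ (Set.Ioi 0) ∧ ContinuousOn κ (Set.Ioi 0) ∧
  (∀ t : ℝ, 0 < t → 0 < κ t) ∧
  Filter.Tendsto κ (nhdsWithin 0 (Set.Ioi 0)) (nhds 0)

/-- Structural assumptions of the model: measurability, second moments, centeredness,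
the regression equation `Y = ∫ βX + σU`, exogeneity of `W`, joint second order
stationarity (in the form of uncorrelated distinct Fourier coefficients) and
nondegeneracy `c_k ≠ 0`. -/
def Model (μ : Measure Ω) (Y : Ω → ℝ) (X W : Ω → H) (U : Ω → ℝ) (β : H) (σ : ℝ) : Prop :=
  Measurable Y ∧ Measurable X ∧ Measurable W ∧ Measurable U ∧
  Integrable (fun ω => ‖X ω‖ ^ 2) μ ∧ Integrable (fun ω => ‖W ω‖ ^ 2) μ ∧
  (∫ ω, X ω ∂μ) = 0 ∧ (∫ ω, W ω ∂μ) = 0 ∧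
  (∀ᵐ ω ∂μ, (Y ω : ℂ) =
      (∫ t : AddCircle (1:ℝ), β t * (X ω) t ∂(@AddCircle.haarAddCircle 1 _)) + σ * U ω) ∧
  (∀ k : ℤ, (∫ ω, (U ω : ℂ) * coef (W ω) k ∂μ) = 0) ∧
  (∀ j k : ℤ, j ≠ k → (∫ ω, conj (coef (X ω) j) * coef (W ω) k ∂μ) = 0) ∧
  (∀ k : ℤ, cPop μ X W k ≠ 0)

/-- Structural assumptions on the pair `(X,W)` alone. -/
def PairModel (μ : Measure Ω) (X W : Ω → H) : Prop :=
  Measurable X ∧ Measurable W ∧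
  Integrable (fun ω => ‖X ω‖ ^ 2) μ ∧ Integrable (fun ω => ‖W ω‖ ^ 2) μ ∧
  (∫ ω, X ω ∂μ) = 0 ∧ (∫ ω, W ω ∂μ) = 0 ∧
  (∀ j k : ℤ, j ≠ k → (∫ ω, conj (coef (X ω) j) * coef (W ω) k ∂μ) = 0) ∧
  (∀ k : ℤ, cPop μ X W k ≠ 0)

/-- The sample `(Y_i,X_i,W_i)` is i.i.d. with common distribution that of `(Y₀,X₀,W₀)`. -/
def IIDSample (μ : Measure Ω) (n : ℕ) (Y : Fin n → Ω → ℝ) (X W : Fin n → Ω → H)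
    (Y0 : Ω → ℝ) (X0 W0 : Ω → H) : Prop :=
  (∀ i, Measurable (Y i)) ∧ (∀ i, Measurable (X i)) ∧ (∀ i, Measurable (W i)) ∧
  iIndepFun (fun i ω => (Y i ω, X i ω, W i ω)) μ ∧
  (∀ i, Measure.map (fun ω => (Y i ω, X i ω, W i ω)) μ
      = Measure.map (fun ω => (Y0 ω, X0 ω, W0 ω)) μ)

/-- The sample `(X_i,W_i)` is i.i.d. with common distribution that of `(X₀,W₀)`. -/
def IIDSampleXW (μ : Measure Ω) (n : ℕ) (X W : Fin n → Ω → H) (X0 W0 : Ω → H) : Prop :=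
  (∀ i, Measurable (X i)) ∧ (∀ i, Measurable (W i)) ∧
  iIndepFun (fun i ω => (X i ω, W i ω)) μ ∧
  (∀ i, Measure.map (fun ω => (X i ω, W i ω)) μ = Measure.map (fun ω => (X0 ω, W0 ω)) μ)

/-- `ĉ_k = n⁻¹ ∑ᵢ ⟨φ_k,X_i⟩⟨W_i,φ_k⟩`. -/
def cHat (n : ℕ) (X W : Fin n → Ω → H) (k : ℤ) (ω : Ω) : ℂ :=
  (n : ℂ)⁻¹ * ∑ i, conj (coef (X i ω) k) * coef (W i ω) k

/-- `ŵ_k = n⁻¹ ∑ᵢ |⟨W_i,φ_k⟩|²`. -/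
def wHat (n : ℕ) (W : Fin n → Ω → H) (k : ℤ) (ω : Ω) : ℝ :=
  (n : ℝ)⁻¹ * ∑ i, ‖coef (W i ω) k‖ ^ 2

/-- `λ̂_k = (|ĉ_k|²/ŵ_k)·1{ŵ_k ≥ α}`. -/
def lamHat (α : ℝ) (n : ℕ) (X W : Fin n → Ω → H) (k : ℤ) (ω : Ω) : ℝ :=
  if α ≤ wHat n W k ω then ‖cHat n X W k ω‖ ^ 2 / wHat n W k ω else 0

/-- `ĝ_k = (conj ĉ_k / ŵ_k)·1{ŵ_k ≥ α}· n⁻¹ ∑ᵢ Y_i ⟨W_i,φ_k⟩`. -/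
def gHat (α : ℝ) (n : ℕ) (Y : Fin n → Ω → ℝ) (X W : Fin n → Ω → H) (k : ℤ) (ω : Ω) : ℂ :=
  (if α ≤ wHat n W k ω then conj (cHat n X W k ω) / (wHat n W k ω : ℂ) else 0) *
    ((n : ℂ)⁻¹ * ∑ i, (Y i ω : ℂ) * coef (W i ω) k)

/-- Fourier coefficients of the estimator `β̂_ν`. -/
def bHat (ν α : ℝ) (n : ℕ) (Y : Fin n → Ω → ℝ) (X W : Fin n → Ω → H) (k : ℤ) (ω : Ω) : ℂ :=
  if α * γw k ^ ν ≤ lamHat α n X W k ω then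
    gHat α n Y X W k ω / (lamHat α n X W k ω : ℂ) else 0

/-- The residual process `T_{n,k} = n⁻¹ ∑ᵢ Y_i ⟨W_i,φ_k⟩ − β_k ĉ_k`. -/
def Tnk (n : ℕ) (Y : Fin n → Ω → ℝ) (X W : Fin n → Ω → H) (β : H) (k : ℤ) (ω : Ω) : ℂ :=
  (n : ℂ)⁻¹ * ∑ i, (Y i ω : ℂ) * coef (W i ω) k - coef β k * cHat n X W k ω

/-- The `𝒲_ν`-risk `E‖β̂_ν − β‖_ν²` of the estimator. -/
def risk (μ : Measure Ω) (ν α : ℝ) (n : ℕ) (Y : Fin n → Ω → ℝ) (X W : Fin n → Ω → H)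
    (β : H) : ℝ≥0∞ :=
  ∫⁻ ω, sobDiff ν (fun k => bHat ν α n Y X W k ω) β ∂μ

/-!
Put `w = w_k` and `ξᵢ = w - |⟨Wᵢ, φ_k⟩|²`. These are independent and centred, and since
`|w - z| ≤ max w z` for `w, z ≥ 0`, the moment condition of order `4m` gives
`E|ξᵢ|^{2m} ≤ (1 + η) w^{2m} ≤ 2η w^{2m}`. On the event `ŵ_k < d w` one has
`∑ ξᵢ > n (1 - d) w`, so Markov's inequality of order `2m` reduces the claim to the
Marcinkiewicz–Zygmund type bound `E (∑ ξᵢ)^{2m} ≤ m^{2m} n^m max_i E|ξᵢ|^{2m}`.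
To prove it, expand `(∑ ξᵢ)^{2m} = ∑_{f : Fin 2m → ι} ∏_j ξ_{f j}`. By independence and
centring, a term vanishes as soon as some index is hit exactly once by `f`; the remaining `f`
have at most `m` values, hence number at most `m^{2m} n^m`, and by AM-GM each of their terms is
at most `max_i E|ξᵢ|^{2m}`.
-/

open Finset

lemma exists_subset_range_of_card_le {β : Type*} {s : Finset β} {k : ℕ} (hk : #s ≤ k) (b₀ : β) :
    ∃ g : Fin k → β, ↑s ⊆ Set.range g := by
  refine ⟨fun i => s.toList.getD i b₀, fun b hb => ?_⟩
  obtain ⟨i, hi, rfl⟩ := List.mem_iff_getElem.mp (mem_toList.mpr hb)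
  exact ⟨⟨i, (hi.trans_eq (length_toList s)).trans_le hk⟩, List.getD_eq_getElem _ _ hi⟩

lemma card_filter_card_image_le {α β : Type*} [Fintype α] [DecidableEq α] [Nonempty α]
    [Fintype β] (k : ℕ) :
    #{f : α → β | #((univ : Finset α).image f) ≤ k} ≤ k ^ Fintype.card α * Fintype.card β ^ k := by
  have hfactor : Set.SurjOn (fun p : (α → Fin k) × (Fin k → β) => p.2 ∘ p.1)
      (univ : Finset ((α → Fin k) × (Fin k → β)))
      ({f : α → β | #((univ : Finset α).image f) ≤ k} : Finset (α → β)) := by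
    intro f hf
    obtain ⟨g, hg⟩ :=
      exists_subset_range_of_card_le (mem_filter.mp hf).2 (f (Classical.arbitrary α))
    choose h hh using fun a => hg (mem_coe.mpr (mem_image_of_mem f (mem_univ a)))
    exact ⟨(h, g), mem_coe.mpr (mem_univ _), funext hh⟩
  simpa [Fintype.card_prod, Fintype.card_fun, mul_comm] using card_le_card_of_surjOn _ hfactor

lemma two_mul_card_image_le_of_card_fiber_ne_one {α β : Type*} [Fintype α] {f : α → β}
    (hf : ∀ b, #{a | f a = b} ≠ 1) : 2 * #((univ : Finset α).image f) ≤ Fintype.card α := by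
  have hfiber : ∀ b ∈ (univ : Finset α).image f, 2 ≤ #{a | f a = b} := fun b hb => by
    obtain ⟨a, -, rfl⟩ := mem_image.mp hb
    have : 0 < #{a' | f a' = f a} := card_pos.mpr ⟨a, by simp⟩
    have := hf (f a)
    omega
  calc 2 * #((univ : Finset α).image f) = ∑ _b ∈ (univ : Finset α).image f, 2 := by
        simp [mul_comm]
    _ ≤ ∑ b ∈ (univ : Finset α).image f, #{a | f a = b} := sum_le_sum hfiber
    _ = Fintype.card α := (card_eq_sum_card_image f univ).symm

lemma card_filter_card_fiber_ne_one_le {ι : Type*} [Fintype ι] {m : ℕ} (hm : m ≠ 0) :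
    #{f : Fin (2 * m) → ι | ∀ i, #{j | f j = i} ≠ 1} ≤ m ^ (2 * m) * Fintype.card ι ^ m := by
  have : Nonempty (Fin (2 * m)) := ⟨⟨0, by omega⟩⟩
  calc #{f : Fin (2 * m) → ι | ∀ i, #{j | f j = i} ≠ 1}
      ≤ #{f : Fin (2 * m) → ι | #((univ : Finset (Fin (2 * m))).image f) ≤ m} := by
        refine card_le_card (monotone_filter_right _ fun f _ hf => ?_)
        have := two_mul_card_image_le_of_card_fiber_ne_one hf
        simp only [Fintype.card_fin] at this
        omega
    _ ≤ m ^ (2 * m) * Fintype.card ι ^ m := by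
        simpa using card_filter_card_image_le (α := Fin (2 * m)) (β := ι) m

lemma sum_pow_eq_sum_prod_comp {ι R : Type*} [Fintype ι] [CommSemiring R] (x : ι → R) (p : ℕ) :
    (∑ i, x i) ^ p = ∑ f : Fin p → ι, ∏ j, x (f j) := by
  simp [sum_pow']

lemma prod_comp_eq_prod_pow_card_fiber {α ι M : Type*} [Fintype α] [Fintype ι] [CommMonoid M]
    (f : α → ι) (x : ι → M) : ∏ a, x (f a) = ∏ i, x i ^ #{a | f a = i} := by
  rw [← prod_fiberwise univ f]
  refine prod_congr rfl fun i _ => ?_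
  rw [prod_congr rfl fun a ha => by rw [(mem_filter.mp ha).2], prod_const]

lemma prod_abs_le_sum_abs_pow_div {α : Type*} [Fintype α] [Nonempty α] (x : α → ℝ) :
    ∏ a, |x a| ≤ (∑ a, |x a| ^ Fintype.card α) / Fintype.card α := by
  set p := Fintype.card α
  have hp : p ≠ 0 := Fintype.card_ne_zero
  have hamgm := Real.geom_mean_le_arith_mean_weighted univ (fun _ => (p : ℝ)⁻¹)
    (fun a => |x a| ^ p) (fun _ _ => by positivity) (by simp [p, hp]) (fun _ _ => by positivity)
  simp only [Real.pow_rpow_inv_natCast (abs_nonneg _) hp, ← mul_sum] at hamgm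
  rwa [div_eq_inv_mul]

lemma abs_sub_pow_le_pow_add_pow {a b : ℝ} (ha : 0 ≤ a) (hb : 0 ≤ b) (k : ℕ) :
    |a - b| ^ k ≤ a ^ k + b ^ k := by
  rcases le_total a b with h | h
  · rw [abs_sub_comm, abs_of_nonneg (sub_nonneg.2 h)]
    linarith [pow_le_pow_left₀ (sub_nonneg.2 h) (sub_le_self b ha) k, pow_nonneg ha k]
  · rw [abs_of_nonneg (sub_nonneg.2 h)]
    linarith [pow_le_pow_left₀ (sub_nonneg.2 h) (sub_le_self a hb) k, pow_nonneg hb k]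

variable {μ : Measure Ω}

section ProductMoments

variable {α : Type*} [Fintype α] [Nonempty α] {Y : α → Ω → ℝ}

lemma integrable_prod_of_integrable_abs_pow (hY : ∀ a, AEStronglyMeasurable (Y a) μ)
    (hint : ∀ a, Integrable (fun ω => |Y a ω| ^ Fintype.card α) μ) :
    Integrable (fun ω => ∏ a, Y a ω) μ := by
  refine ((integrable_finsetSum univ fun a _ => hint a).div_const (Fintype.card α : ℝ)).mono'
    (Finset.aestronglyMeasurable_fun_prod _ fun a _ => hY a) (Eventually.of_forall fun ω => ?_)
  rw [Real.norm_eq_abs, abs_prod]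
  exact prod_abs_le_sum_abs_pow_div _

lemma integral_prod_le_of_integral_abs_pow_le {M : ℝ}
    (hint : ∀ a, Integrable (fun ω => |Y a ω| ^ Fintype.card α) μ)
    (hmom : ∀ a, ∫ ω, |Y a ω| ^ Fintype.card α ∂μ ≤ M) :
    ∫ ω, ∏ a, Y a ω ∂μ ≤ M := by
  have hp : (0 : ℝ) < Fintype.card α := by exact_mod_cast Fintype.card_pos
  calc ∫ ω, ∏ a, Y a ω ∂μ ≤ ∫ ω, |∏ a, Y a ω| ∂μ :=
        (le_abs_self _).trans abs_integral_le_integral_abs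
    _ ≤ ∫ ω, (∑ a, |Y a ω| ^ Fintype.card α) / Fintype.card α ∂μ := by
        refine integral_mono_of_nonneg (Eventually.of_forall fun _ => abs_nonneg _)
          ((integrable_finsetSum _ fun a _ => hint a).div_const _)
          (Eventually.of_forall fun ω => ?_)
        simp only [abs_prod]
        exact prod_abs_le_sum_abs_pow_div _
    _ = (∑ a, ∫ ω, |Y a ω| ^ Fintype.card α ∂μ) / Fintype.card α := by
        rw [integral_div, integral_finsetSum _ fun a _ => hint a]
    _ ≤ (∑ _a : α, M) / Fintype.card α := by gcongr with a; exact hmom a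
    _ = M := by rw [sum_const, card_univ, nsmul_eq_mul]; field_simp

end ProductMoments

lemma integral_prod_comp_eq_zero_of_card_fiber_eq_one {α ι : Type*} [Fintype α] [Fintype ι]
    {ξ : ι → Ω → ℝ} (hind : iIndepFun ξ μ) (hmeas : ∀ i, AEStronglyMeasurable (ξ i) μ)
    (hcent : ∀ i, μ[ξ i] = 0) {f : α → ι} {i : ι} (hi : #{a | f a = i} = 1) :
    ∫ ω, ∏ a, ξ (f a) ω ∂μ = 0 := by
  have hfiber (ω : Ω) := prod_comp_eq_prod_pow_card_fiber f (ξ · ω)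
  simp only [hfiber]
  rw [hind.integral_fun_prod_comp (fun i => (hmeas i).aemeasurable)
    (fun _ => (continuous_pow _).aestronglyMeasurable)]
  exact prod_eq_zero (mem_univ i) (by simpa [hi] using hcent i)

lemma integrable_sum_pow {ι : Type*} [Fintype ι] {ξ : ι → Ω → ℝ} {p : ℕ} (hp : p ≠ 0)
    (hmeas : ∀ i, AEStronglyMeasurable (ξ i) μ)
    (hint : ∀ i, Integrable (fun ω => |ξ i ω| ^ p) μ) :
    Integrable (fun ω => (∑ i, ξ i ω) ^ p) μ := by
  have : Nonempty (Fin p) := ⟨⟨0, by omega⟩⟩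
  simp_rw [sum_pow_eq_sum_prod_comp]
  exact integrable_finsetSum _ fun f _ =>
    integrable_prod_of_integrable_abs_pow (fun j => hmeas (f j))
      (by simpa using fun j => hint (f j))

theorem integral_sum_pow_two_mul_le {ι : Type*} [Fintype ι] {ξ : ι → Ω → ℝ} {m : ℕ} {M : ℝ}
    (hm : m ≠ 0) (hind : iIndepFun ξ μ) (hmeas : ∀ i, AEStronglyMeasurable (ξ i) μ)
    (hcent : ∀ i, μ[ξ i] = 0) (hint : ∀ i, Integrable (fun ω => |ξ i ω| ^ (2 * m)) μ)
    (hmom : ∀ i, ∫ ω, |ξ i ω| ^ (2 * m) ∂μ ≤ M) :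
    ∫ ω, (∑ i, ξ i ω) ^ (2 * m) ∂μ ≤ m ^ (2 * m) * Fintype.card ι ^ m * M := by
  rcases isEmpty_or_nonempty ι with hι | ⟨⟨i₀⟩⟩
  · simp [hm]
  have : Nonempty (Fin (2 * m)) := ⟨⟨0, by omega⟩⟩
  have hM : 0 ≤ M := (integral_nonneg fun _ => by positivity).trans (hmom i₀)
  have hint_card (f : Fin (2 * m) → ι) (j : Fin (2 * m)) :
      Integrable (fun ω => |ξ (f j) ω| ^ Fintype.card (Fin (2 * m))) μ := by
    simpa using hint (f j)
  set A : Finset (Fin (2 * m) → ι) := {f | ∀ i, #{j | f j = i} ≠ 1}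
  calc ∫ ω, (∑ i, ξ i ω) ^ (2 * m) ∂μ
      = ∑ f : Fin (2 * m) → ι, ∫ ω, ∏ j, ξ (f j) ω ∂μ := by
        simp_rw [sum_pow_eq_sum_prod_comp]
        exact integral_finsetSum _ fun f _ =>
          integrable_prod_of_integrable_abs_pow (fun j => hmeas (f j)) (hint_card f)
    _ = ∑ f ∈ A, ∫ ω, ∏ j, ξ (f j) ω ∂μ := by
        refine (sum_filter_of_ne fun f _ hf i hi => hf ?_).symm
        exact integral_prod_comp_eq_zero_of_card_fiber_eq_one hind hmeas hcent hi
    _ ≤ ∑ _f ∈ A, M :=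
        sum_le_sum fun f _ => integral_prod_le_of_integral_abs_pow_le (hint_card f)
          (by simpa using fun j => hmom (f j))
    _ ≤ m ^ (2 * m) * Fintype.card ι ^ m * M := by
        rw [sum_const, nsmul_eq_mul]
        gcongr
        exact_mod_cast card_filter_card_fiber_ne_one_le hm

lemma measure_ge_le_integral_pow_div [IsFiniteMeasure μ] {S : Ω → ℝ} {p : ℕ} (hp : Even p)
    (hS : Integrable (fun ω => S ω ^ p) μ) {t : ℝ} (ht : 0 < t) :
    μ {ω | t ≤ S ω} ≤ ENNReal.ofReal ((∫ ω, S ω ^ p ∂μ) / t ^ p) := by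
  have hmarkov := mul_meas_ge_le_integral_of_nonneg
    (Eventually.of_forall fun ω => hp.pow_nonneg (S ω)) hS (t ^ p)
  calc μ {ω | t ≤ S ω} ≤ μ {ω | t ^ p ≤ S ω ^ p} :=
        measure_mono fun ω hω => pow_le_pow_left₀ ht.le hω p
    _ = ENNReal.ofReal (μ.real {ω | t ^ p ≤ S ω ^ p}) :=
        (ofReal_measureReal (measure_ne_top _ _)).symm
    _ ≤ ENNReal.ofReal ((∫ ω, S ω ^ p ∂μ) / t ^ p) :=
        ENNReal.ofReal_le_ofReal ((le_div_iff₀' (by positivity)).2 hmarkov)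

lemma integrable_abs_const_sub_pow [IsFiniteMeasure μ] {Z : Ω → ℝ} {w : ℝ} {p : ℕ}
    (hZ : AEStronglyMeasurable Z μ) (hnonneg : ∀ ω, 0 ≤ Z ω) (hw : 0 ≤ w)
    (hint_pow : Integrable (fun ω => Z ω ^ p) μ) :
    Integrable (fun ω => |w - Z ω| ^ p) μ :=
  ((integrable_const _).add hint_pow).mono' ((aestronglyMeasurable_const.sub hZ).norm.pow _)
    (Eventually.of_forall fun ω => by
      rw [Real.norm_eq_abs, abs_of_nonneg (by positivity)]
      exact abs_sub_pow_le_pow_add_pow hw (hnonneg ω) p)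

lemma integral_abs_const_sub_pow_le [IsProbabilityMeasure μ] {Z : Ω → ℝ} {w : ℝ} {p : ℕ}
    (hZ : AEStronglyMeasurable Z μ) (hnonneg : ∀ ω, 0 ≤ Z ω) (hw : 0 ≤ w)
    (hint_pow : Integrable (fun ω => Z ω ^ p) μ) :
    ∫ ω, |w - Z ω| ^ p ∂μ ≤ w ^ p + ∫ ω, Z ω ^ p ∂μ := by
  calc ∫ ω, |w - Z ω| ^ p ∂μ ≤ ∫ ω, w ^ p + Z ω ^ p ∂μ :=
        integral_mono (integrable_abs_const_sub_pow hZ hnonneg hw hint_pow)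
          ((integrable_const _).add hint_pow)
          fun ω => abs_sub_pow_le_pow_add_pow hw (hnonneg ω) p
    _ = w ^ p + ∫ ω, Z ω ^ p ∂μ := by
        rw [integral_add (integrable_const _) hint_pow, integral_const, probReal_univ, one_smul]

theorem measure_mean_lt_le {ι : Type*} [Fintype ι] [Nonempty ι] [IsProbabilityMeasure μ]
    {Z : ι → Ω → ℝ} {m : ℕ} {w η d : ℝ} (hm : m ≠ 0) (hind : iIndepFun Z μ)
    (hnonneg : ∀ i ω, 0 ≤ Z i ω) (hint : ∀ i, Integrable (Z i) μ)
    (hint_pow : ∀ i, Integrable (fun ω => Z i ω ^ (2 * m)) μ) (hmean : ∀ i, μ[Z i] = w)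
    (hmom : ∀ i, ∫ ω, Z i ω ^ (2 * m) ∂μ ≤ η * w ^ (2 * m)) (hw : 0 < w) (hη : 1 ≤ η)
    (hd : d < 1) :
    μ {ω | (Fintype.card ι : ℝ)⁻¹ * ∑ i, Z i ω < d * w} ≤
      ENNReal.ofReal (2 * m ^ (2 * m) / (1 - d) ^ (2 * m) / Fintype.card ι ^ m * η) := by
  set n : ℝ := (Fintype.card ι : ℝ)
  have hn : 0 < n := Nat.cast_pos.2 Fintype.card_pos
  set ξ : ι → Ω → ℝ := fun i ω => w - Z i ω
  have hξ_meas (i : ι) : AEStronglyMeasurable (ξ i) μ :=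
    aestronglyMeasurable_const.sub (hint i).aestronglyMeasurable
  have hξ_int (i : ι) : Integrable (fun ω => |ξ i ω| ^ (2 * m)) μ :=
    integrable_abs_const_sub_pow (hint i).aestronglyMeasurable (hnonneg i) hw.le (hint_pow i)
  have hξ_mom (i : ι) : ∫ ω, |ξ i ω| ^ (2 * m) ∂μ ≤ 2 * η * w ^ (2 * m) := by
    have := integral_abs_const_sub_pow_le (hint i).aestronglyMeasurable (hnonneg i) hw.le
      (hint_pow i)
    nlinarith [hmom i, pow_nonneg hw.le (2 * m)]
  have hξ_cent (i : ι) : μ[ξ i] = 0 := by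
    change ∫ ω, (w - Z i ω) ∂μ = 0
    rw [integral_sub (integrable_const w) (hint i), hmean i, integral_const, probReal_univ,
      one_smul, sub_self]
  have hsum_bound : ∫ ω, (∑ i, ξ i ω) ^ (2 * m) ∂μ ≤ m ^ (2 * m) * n ^ m * (2 * η * w ^ (2 * m)) :=
    integral_sum_pow_two_mul_le hm
      (hind.comp (fun _ x => w - x) fun _ => measurable_const.sub measurable_id)
      hξ_meas hξ_cent hξ_int hξ_mom
  have ht : 0 < n * ((1 - d) * w) := by have := sub_pos.2 hd; positivity
  calc μ {ω | n⁻¹ * ∑ i, Z i ω < d * w}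
      ≤ μ {ω | n * ((1 - d) * w) ≤ ∑ i, ξ i ω} := by
        refine measure_mono fun ω (hω : n⁻¹ * ∑ i, Z i ω < d * w) => ?_
        rw [inv_mul_lt_iff₀ hn] at hω
        change n * ((1 - d) * w) ≤ ∑ i, (w - Z i ω)
        rw [sum_sub_distrib, sum_const, card_univ, nsmul_eq_mul]
        linarith
    _ ≤ ENNReal.ofReal ((∫ ω, (∑ i, ξ i ω) ^ (2 * m) ∂μ) / (n * ((1 - d) * w)) ^ (2 * m)) :=
        measure_ge_le_integral_pow_div (even_two_mul m)
          (integrable_sum_pow (by omega) hξ_meas hξ_int) ht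
    _ ≤ ENNReal.ofReal (2 * m ^ (2 * m) / (1 - d) ^ (2 * m) / n ^ m * η) := by
        refine ENNReal.ofReal_le_ofReal
          ((div_le_div_of_nonneg_right hsum_bound (by positivity)).trans (le_of_eq ?_))
        have : (1 - d) ≠ 0 := (sub_pos.2 hd).ne'
        rw [mul_pow, mul_pow, show n ^ (2 * m) = n ^ m * n ^ m by ring]
        field_simp

lemma integrable_and_integral_le_of_lintegral_ofReal_le {g : Ω → ℝ}
    (hg : AEStronglyMeasurable g μ) (hnonneg : 0 ≤ᵐ[μ] g) {c : ℝ} (hc : 0 ≤ c)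
    (h : ∫⁻ ω, ENNReal.ofReal (g ω) ∂μ ≤ ENNReal.ofReal c) :
    Integrable g μ ∧ ∫ ω, g ω ∂μ ≤ c := by
  refine ⟨⟨hg, (hasFiniteIntegral_iff_ofReal hnonneg).2 (h.trans_lt ENNReal.ofReal_lt_top)⟩, ?_⟩
  rw [integral_eq_lintegral_of_nonneg_ae hnonneg hg]
  exact ENNReal.toReal_le_of_le_ofReal hc h

lemma coef_eq_inner (v : H) (k : ℤ) : coef v k = inner ℂ (fourierBasis k) v :=
  fourierBasis.repr_apply_apply v k

lemma continuous_coef (k : ℤ) : Continuous fun v : H => coef v k := by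
  simp_rw [coef_eq_inner]
  exact continuous_const.inner continuous_id

lemma norm_coef_le (v : H) (k : ℤ) : ‖coef v k‖ ≤ ‖v‖ := by
  rw [coef_eq_inner]
  have := norm_inner_le_norm (𝕜 := ℂ) (fourierBasis k) v
  rwa [fourierBasis.orthonormal.1 k, one_mul] at this

lemma integrable_norm_coef_sq {W : Ω → H} (hW : Measurable W)
    (hW2 : Integrable (fun ω => ‖W ω‖ ^ 2) μ) (k : ℤ) :
    Integrable (fun ω => ‖coef (W ω) k‖ ^ 2) μ :=
  hW2.mono' (((continuous_coef k).norm.pow 2).measurable.comp hW).aestronglyMeasurable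
    (Eventually.of_forall fun ω => by
      rw [Real.norm_eq_abs, abs_of_nonneg (by positivity)]
      exact pow_le_pow_left₀ (norm_nonneg _) (norm_coef_le _ _) 2)

lemma wPop_pos_of_cPop_ne_zero {X W : Ω → H} {k : ℤ}
    (hW : Integrable (fun ω => ‖coef (W ω) k‖ ^ 2) μ) (hc : cPop μ X W k ≠ 0) :
    0 < wPop μ W k := by
  refine (integral_nonneg fun ω => by positivity).lt_of_ne fun hw => hc ?_
  have hzero : ∀ᵐ ω ∂μ, coef (W ω) k = 0 := by
    filter_upwards [(integral_eq_zero_iff_of_nonneg (fun ω => by positivity) hW).1 hw.symm]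
      with ω hω
    simpa using hω
  rw [cPop, integral_eq_zero_of_ae]
  filter_upwards [hzero] with ω hω
  simp [hω]

lemma memF.integral_norm_coef_sq_pow_le {X W : Ω → H} {m : ℕ} {η τ : ℝ}
    (hF : memF μ X W (4 * m) η τ) (hW : Measurable W) (k : ℤ) :
    Integrable (fun ω => (‖coef (W ω) k‖ ^ 2) ^ (2 * m)) μ ∧
      ∫ ω, (‖coef (W ω) k‖ ^ 2) ^ (2 * m) ∂μ ≤ η * wPop μ W k ^ (2 * m) := by
  have hw : 0 ≤ wPop μ W k := integral_nonneg fun ω => by positivity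
  refine integrable_and_integral_le_of_lintegral_ofReal_le
    (g := fun ω => (‖coef (W ω) k‖ ^ 2) ^ (2 * m))
    ((((continuous_coef k).norm.pow 2).pow _).measurable.comp hW).aestronglyMeasurable
    (Eventually.of_forall fun ω => by positivity) (by nlinarith [hF.1, pow_nonneg hw (2 * m)]) ?_
  have hexp : ((4 * m : ℕ) : ℝ) / 2 = (2 * m : ℕ) := by push_cast; ring
  simpa only [← pow_mul, hexp, Real.rpow_natCast, show 2 * (2 * m) = 4 * m by ring]
    using hF.2.2.2.1 k

/-- Deviation bound for the empirical variance (Lemma A.2, part 1). -/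
theorem lemA2_part1 (m : ℕ) (hm : 1 ≤ m) :
    ∃ C : ℝ, 0 < C ∧
      ∀ (Ω : Type) [MeasurableSpace Ω] (μ : Measure Ω) [IsProbabilityMeasure μ]
        (n : ℕ) (X W : Fin n → Ω → H) (X0 W0 : Ω → H) (η τ d : ℝ),
        0 < n → 0 < d → d < 1 →
        PairModel μ X0 W0 →
        IIDSampleXW μ n X W X0 W0 →
        memF μ X0 W0 (4 * m) η τ →
        ∀ k : ℤ,
          μ {ω | wHat n W k ω / wPop μ W0 k < d} ≤
            ENNReal.ofReal (C / (1 - d) ^ (2 * m) / (n : ℝ) ^ m * η) := by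
  refine ⟨2 * m ^ (2 * m), by positivity, ?_⟩
  intro Ω _ μ _ n X W X0 W0 η τ d hn _ hd hPM hIID hF k
  obtain ⟨hX0, hW0, -, hW0sq, -, -, -, hc⟩ := hPM
  obtain ⟨hX, hW, hind, hlaw⟩ := hIID
  have hZ : Measurable fun v : H => ‖coef v k‖ ^ 2 := ((continuous_coef k).norm.pow 2).measurable
  have hident (i : Fin n) :
      IdentDistrib (fun ω => ‖coef (W i ω) k‖ ^ 2) (fun ω => ‖coef (W0 ω) k‖ ^ 2) μ μ :=
    IdentDistrib.comp ⟨((hX i).prodMk (hW i)).aemeasurable, (hX0.prodMk hW0).aemeasurable,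
      hlaw i⟩ (hZ.comp measurable_snd)
  have hident_pow (i : Fin n) := (hident i).comp (measurable_id.pow_const (2 * m))
  have hint := integrable_norm_coef_sq hW0 hW0sq k
  have hw := wPop_pos_of_cPop_ne_zero hint (hc k)
  obtain ⟨hint_pow, hmom⟩ := hF.integral_norm_coef_sq_pow_le hW0 k
  have : Nonempty (Fin n) := ⟨⟨0, hn⟩⟩
  have key := measure_mean_lt_le (Z := fun i ω => ‖coef (W i ω) k‖ ^ 2) (w := wPop μ W0 k)
    (by omega) (hind.comp (fun _ p => ‖coef p.2 k‖ ^ 2)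
      fun _ => hZ.comp measurable_snd) (fun _ _ => by positivity)
    (fun i => (hident i).integrable_iff.2 hint) (fun i => (hident_pow i).integrable_iff.2 hint_pow)
    (fun i => (hident i).integral_eq) (fun i => (hident_pow i).integral_eq.trans_le hmom) hw hF.1 hd
  simp only [Fintype.card_fin] at key
  convert key using 2
  ext ω
  simp [wHat, div_lt_iff₀ hw]

end FLIR
end
end

section
/- Polynomially decaying eigenvalues satisfy the link condition: Let a > 0, 0 ≤ ν < p, and let (λ_k)_{k∈ℤ} be a summable sequence of positive reals such that there is c ≥ 1 with c⁻¹·(1+|k|)^{−2a} ≤ λ_k ≤ c·(1+|k|)^{−2a} for all k ∈ ℤ. Then there exists d ≥ 1 such that, with κ(t) := t^{(p−ν)/(a+ν)} and λ₊ := max(1, sup_k λ_k), the inequalities κ(λ_k/(d·γ_k^ν·λ₊)) ≤ γ_k^{ν−p} ≤ κ(d·λ_k/(γ_k^ν·λ₊)) hold for all k ∈ ℤ, i.e. (λ_k) ∈ 𝒮_{κ,d}. -/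
open MeasureTheory Complex Filter Real Set ProbabilityTheory
open scoped ENNReal NNReal Topology ComplexConjugate Classical

noncomputable section

namespace FLIR

variable {Ω : Type} [MeasurableSpace Ω]

/-
`γ_k` is comparable to `(1 + |k|)²`, so the hypotheses make `λ_k` comparable to `γ_k^{-a}`,
and `1 ≤ λ₊ ≤ c`. Since `κ(t) = t^{(p-ν)/(a+ν)}` is monotone and `κ(γ_k^{-(a+ν)}) = γ_k^{ν-p}`,
the two link inequalities amount to `λ_k ≤ d λ₊ γ_k^{-a}` and `λ₊ γ_k^{-a} ≤ d λ_k`,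
which hold with `d = c² (4π²)^a`.
-/

lemma γw_pos (k : ℤ) : 0 < γw k := by
  unfold γw
  positivity

lemma one_add_abs_sq_le_γw (k : ℤ) : (1 + |(k : ℝ)|) ^ 2 ≤ γw k := by
  have habs : |(k : ℝ)| ≤ (k : ℝ) ^ 2 := by
    have := Int.natAbs_le_self_sq k
    rw [Int.natCast_natAbs] at this
    exact_mod_cast this
  have hπ : (3 : ℝ) ≤ (2 * π) ^ 2 := by nlinarith [Real.pi_gt_three]
  rw [γw, mul_pow]
  nlinarith [sq_abs (k : ℝ), mul_le_mul_of_nonneg_right hπ (sq_nonneg (k : ℝ))]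

lemma γw_le_mul_one_add_abs_sq (k : ℤ) : γw k ≤ (2 * π) ^ 2 * (1 + |(k : ℝ)|) ^ 2 := by
  have hπ : (1 : ℝ) ≤ (2 * π) ^ 2 := by nlinarith [Real.pi_gt_three]
  rw [γw, mul_pow, ← sq_abs (k : ℝ)]
  nlinarith [abs_nonneg (k : ℝ), sq_nonneg (k : ℝ)]

section RpowComparison

variable {A g a : ℝ}

lemma rpow_neg_le_rpow_neg_two_mul (hA : 0 < A) (hAg : A ^ 2 ≤ g) (ha : 0 ≤ a) :
    g ^ (-a) ≤ A ^ (-(2 * a)) := by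
  rw [neg_mul_eq_mul_neg, rpow_mul hA.le, rpow_two]
  exact rpow_le_rpow_of_nonpos (by positivity) hAg (neg_nonpos.mpr ha)

lemma rpow_neg_two_mul_le_mul_rpow_neg {M : ℝ} (hA : 0 < A) (hM : 0 < M) (hg : 0 < g)
    (hgA : g ≤ M * A ^ 2) (ha : 0 ≤ a) :
    A ^ (-(2 * a)) ≤ M ^ a * g ^ (-a) := by
  have hMA : (M * A ^ 2) ^ (-a) ≤ g ^ (-a) := rpow_le_rpow_of_nonpos hg hgA (neg_nonpos.mpr ha)
  calc A ^ (-(2 * a)) = M ^ a * (M * A ^ 2) ^ (-a) := by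
        rw [mul_rpow hM.le (by positivity), ← mul_assoc, ← rpow_add hM, add_neg_cancel,
          rpow_zero, one_mul, neg_mul_eq_mul_neg, rpow_mul hA.le, rpow_two]
    _ ≤ M ^ a * g ^ (-a) := by gcongr

end RpowComparison

section Link

variable {g l L D a p ν : ℝ}

lemma rpow_sub_eq_rpow_neg_add_rpow (hg : 0 < g) (haν : 0 < a + ν) :
    g ^ (ν - p) = (g ^ (-(a + ν))) ^ ((p - ν) / (a + ν)) := by
  rw [← rpow_mul hg.le]
  congr 1
  field_simp
  ring

lemma rpow_neg_add_mul_rpow (hg : 0 < g) : g ^ (-(a + ν)) * g ^ ν = g ^ (-a) := by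
  rw [← rpow_add hg]
  ring_nf

lemma link_lower_of_le_mul_rpow_neg (hg : 0 < g) (hl : 0 ≤ l) (hD : 0 < D) (hL : 0 < L)
    (haν : 0 < a + ν) (hνp : ν < p) (h : l ≤ D * L * g ^ (-a)) :
    (l / (D * g ^ ν * L)) ^ ((p - ν) / (a + ν)) ≤ g ^ (ν - p) := by
  rw [rpow_sub_eq_rpow_neg_add_rpow hg haν]
  refine rpow_le_rpow (by positivity) ?_ (div_nonneg (by linarith) haν.le)
  rw [div_le_iff₀ (by positivity)]
  calc l ≤ D * L * g ^ (-a) := h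
    _ = D * L * (g ^ (-(a + ν)) * g ^ ν) := by rw [rpow_neg_add_mul_rpow hg]
    _ = g ^ (-(a + ν)) * (D * g ^ ν * L) := by ring

lemma link_upper_of_mul_rpow_neg_le (hg : 0 < g) (hL : 0 < L)
    (haν : 0 < a + ν) (hνp : ν < p) (h : L * g ^ (-a) ≤ D * l) :
    g ^ (ν - p) ≤ (D * l / (g ^ ν * L)) ^ ((p - ν) / (a + ν)) := by
  rw [rpow_sub_eq_rpow_neg_add_rpow hg haν]
  refine rpow_le_rpow (by positivity) ?_ (div_nonneg (by linarith) haν.le)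
  rw [le_div_iff₀ (by positivity)]
  calc g ^ (-(a + ν)) * (g ^ ν * L) = L * (g ^ (-(a + ν)) * g ^ ν) := by ring
    _ = L * g ^ (-a) := by rw [rpow_neg_add_mul_rpow hg]
    _ ≤ D * l := h

end Link

section PolynomialDecay

variable {a c : ℝ} {lam : ℤ → ℝ}

lemma le_mul_rpow_neg_γw (ha : 0 ≤ a) (hc : 0 ≤ c)
    (hup : ∀ k : ℤ, lam k ≤ c * (1 + |(k : ℝ)|) ^ (-(2 * a))) (k : ℤ) :
    lam k ≤ c * ((2 * π) ^ 2) ^ a * γw k ^ (-a) := by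
  calc lam k ≤ c * (1 + |(k : ℝ)|) ^ (-(2 * a)) := hup k
    _ ≤ c * (((2 * π) ^ 2) ^ a * γw k ^ (-a)) := by
        gcongr
        exact rpow_neg_two_mul_le_mul_rpow_neg (by positivity) (by positivity) (γw_pos k)
          (γw_le_mul_one_add_abs_sq k) ha
    _ = c * ((2 * π) ^ 2) ^ a * γw k ^ (-a) := by ring

lemma rpow_neg_γw_le_mul (ha : 0 ≤ a) (hc : 0 < c)
    (hlow : ∀ k : ℤ, c⁻¹ * (1 + |(k : ℝ)|) ^ (-(2 * a)) ≤ lam k) (k : ℤ) :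
    γw k ^ (-a) ≤ c * lam k := by
  calc γw k ^ (-a) ≤ (1 + |(k : ℝ)|) ^ (-(2 * a)) :=
        rpow_neg_le_rpow_neg_two_mul (by positivity) (one_add_abs_sq_le_γw k) ha
    _ = c * (c⁻¹ * (1 + |(k : ℝ)|) ^ (-(2 * a))) := by field_simp
    _ ≤ c * lam k := by gcongr; exact hlow k

lemma iSup_le_of_le_mul_rpow_neg (ha : 0 ≤ a) (hc : 0 ≤ c)
    (hup : ∀ k : ℤ, lam k ≤ c * (1 + |(k : ℝ)|) ^ (-(2 * a))) :
    ⨆ k, lam k ≤ c := by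
  refine ciSup_le fun k => (hup k).trans (mul_le_of_le_one_right hc ?_)
  exact rpow_le_one_of_one_le_of_nonpos (by simp) (by linarith)

end PolynomialDecay

theorem poly_decay_link_general
    (a p ν : ℝ) (ha : 0 < a) (hν0 : 0 ≤ ν) (hνp : ν < p)
    (lam : ℤ → ℝ) (hpos : ∀ k, 0 < lam k)
    (c : ℝ) (hc : 1 ≤ c)
    (hlow : ∀ k : ℤ, c⁻¹ * (1 + |(k : ℝ)|) ^ (-(2 * a)) ≤ lam k)
    (hup : ∀ k : ℤ, lam k ≤ c * (1 + |(k : ℝ)|) ^ (-(2 * a))) :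
    ∃ d : ℝ, 1 ≤ d ∧ ∀ k : ℤ,
      (lam k / (d * γw k ^ ν * max 1 (⨆ j : ℤ, lam j))) ^ ((p - ν) / (a + ν)) ≤
          γw k ^ (ν - p) ∧
      γw k ^ (ν - p) ≤
          (d * lam k / (γw k ^ ν * max 1 (⨆ j : ℤ, lam j))) ^ ((p - ν) / (a + ν)) := by
  set L := max 1 (⨆ j : ℤ, lam j)
  set M : ℝ := ((2 * π) ^ 2) ^ a
  have hc0 : 0 < c := zero_lt_one.trans_le hc
  have hM : 1 ≤ M := one_le_rpow (by nlinarith [Real.pi_gt_three]) ha.le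
  have hL1 : 1 ≤ L := le_max_left _ _
  have hLc : L ≤ c := max_le hc (iSup_le_of_le_mul_rpow_neg ha.le hc0.le hup)
  have haν : 0 < a + ν := by linarith
  refine ⟨c ^ 2 * M, one_le_mul_of_one_le_of_one_le (one_le_pow₀ hc) hM, fun k => ⟨?_, ?_⟩⟩
  · have hγ : 0 < γw k ^ (-a) := rpow_pos_of_pos (γw_pos k) _
    refine link_lower_of_le_mul_rpow_neg (γw_pos k) (hpos k).le (by positivity) (by positivity) haν hνp ?_
    calc lam k ≤ c * M * γw k ^ (-a) := le_mul_rpow_neg_γw ha.le hc0.le hup k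
      _ ≤ c ^ 2 * M * L * γw k ^ (-a) := by
          refine mul_le_mul_of_nonneg_right ?_ hγ.le
          nlinarith [mul_le_mul_of_nonneg_left hL1 (by positivity : (0 : ℝ) ≤ c ^ 2 * M),
            mul_le_mul_of_nonneg_right (le_self_pow₀ hc two_ne_zero) (by positivity : 0 ≤ M)]
  · have hl := hpos k
    refine link_upper_of_mul_rpow_neg_le (γw_pos k) (by positivity) haν hνp ?_
    calc L * γw k ^ (-a) ≤ c * (c * lam k) :=
          mul_le_mul hLc (rpow_neg_γw_le_mul ha.le hc0 hlow k)
            (rpow_pos_of_pos (γw_pos k) _).le hc0.le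
      _ ≤ c ^ 2 * M * lam k := by
          nlinarith [mul_le_mul_of_nonneg_left hM (by positivity : (0 : ℝ) ≤ c ^ 2 * lam k)]

/-- Polynomially decaying eigenvalues satisfy the link condition,
with index function `κ(t) = t^((p-ν)/(a+ν))`. -/
theorem poly_decay_link
    (a p ν : ℝ) (ha : 0 < a) (hν0 : 0 ≤ ν) (hνp : ν < p)
    (lam : ℤ → ℝ) (hpos : ∀ k, 0 < lam k) (hsum : Summable lam)
    (c : ℝ) (hc : 1 ≤ c)
    (hlow : ∀ k : ℤ, c⁻¹ * (1 + |(k : ℝ)|) ^ (-(2 * a)) ≤ lam k)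
    (hup : ∀ k : ℤ, lam k ≤ c * (1 + |(k : ℝ)|) ^ (-(2 * a))) :
    ∃ d : ℝ, 1 ≤ d ∧ ∀ k : ℤ,
      (lam k / (d * γw k ^ ν * max 1 (⨆ j : ℤ, lam j))) ^ ((p - ν) / (a + ν)) ≤
          γw k ^ (ν - p) ∧
      γw k ^ (ν - p) ≤
          (d * lam k / (γw k ^ ν * max 1 (⨆ j : ℤ, lam j))) ^ ((p - ν) / (a + ν)) :=
  poly_decay_link_general a p ν ha hν0 hνp lam hpos c hc hlow hup

end FLIR
end
end
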